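/- Let v ∈ Δ_{p+1,q+1} \ {0} with e_−·v = 0. Then the kernel of v under Clifford multiplication by vectors of ℝ^{p+1,q+1} is {X ∈ ℝ^{p+1,q+1} : X·v = 0} = ℝe_− ⊕ {y ∈ span(e₁,…,e_n) : y·v = 0}; in particular its dimension exceeds by exactly one the dimension of the kernel of v under Clifford multiplication by vectors of ℝ^{p,q} = span(e₁,…,e_n). -/

import Mathlib

open Complex Matrix

namespace Paper

noncomputable section

/-- The 2×2 generator matrices of Remark 2.1. -/
def matE : Matrix (Fin 2) (Fin 2) ℂ := 1
def matT : Matrix (Fin 2) (Fin 2) ℂ := !![-1, 0; 0, 1]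
def matG1 : Matrix (Fin 2) (Fin 2) ℂ := !![0, Complex.I; Complex.I, 0]
def matG2 : Matrix (Fin 2) (Fin 2) ℂ := !![0, -1; 1, 0]

/-- Iterated Kronecker product of 2×2 matrices, realised on the index type `Fin m → Fin 2`
(the slot `ν` corresponds to the `(ν+1)`-st label of the basis spinors `u(ε₁,…,ε_m)`,
i.e. the Kronecker factors are taken from right to left). -/
def tprod {m : ℕ} (M : Fin m → Matrix (Fin 2) (Fin 2) ℂ) :
    Matrix (Fin m → Fin 2) (Fin m → Fin 2) ℂ :=
  Matrix.of fun a b => ∏ ν, M ν (a ν) (b ν)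

/-- `τ_j = 1` if `ε_j = 1` and `τ_j = i` if `ε_j = -1`. -/
def tau {n : ℕ} (ε : Fin n → ℝ) (j : Fin n) : ℂ := if ε j = 1 then 1 else Complex.I

/-- The matrices `Φ_{p,q}(e_i)` of the explicit Clifford representation of Remark 2.1
(0-based index `i`; the paper's `e_{2j-1}` resp. `e_{2j}` correspond to `i = 2j-2` resp.
`i = 2j-1`, acting by `g₁` resp. `g₂` in slot `j-1`, by `T` in the lower slots and by `E`
in the higher slots).  For odd `n` the last matrix is the first component
`pr₁ ∘ Φ̃ (e_n) = τ_n · (i T ⊗ ⋯ ⊗ T)`. -/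
def Phi {n : ℕ} (ε : Fin n → ℝ) (i : Fin n) :
    Matrix (Fin (n / 2) → Fin 2) (Fin (n / 2) → Fin 2) ℂ :=
  tau ε i •
    if i.val < 2 * (n / 2) then
      tprod fun ν : Fin (n / 2) =>
        if ν.val < i.val / 2 then matT
        else if ν.val = i.val / 2 then (if i.val % 2 = 0 then matG1 else matG2)
        else matE
    else Complex.I • tprod fun _ : Fin (n / 2) => matT

/-- The spinor module `Δ_{p,q} = ℂ^{2^{⌊n/2⌋}}`. -/
abbrev Spinor (n : ℕ) := (Fin (n / 2) → Fin 2) → ℂ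

/-- Clifford multiplication by a real vector, as a matrix. -/
def cliffR {n : ℕ} (ε : Fin n → ℝ) (x : Fin n → ℝ) :
    Matrix (Fin (n / 2) → Fin 2) (Fin (n / 2) → Fin 2) ℂ :=
  ∑ i, (x i : ℂ) • Phi ε i

/-- Clifford multiplication by a complex vector (complex-bilinear extension). -/
def cliffC {n : ℕ} (ε : Fin n → ℝ) (x : Fin n → ℂ) :
    Matrix (Fin (n / 2) → Fin 2) (Fin (n / 2) → Fin 2) ℂ :=
  ∑ i, x i • Phi ε i

/-- The scalar product `⟨x,y⟩_{p,q} = ∑ ε_i x_i y_i` on `ℝⁿ`. -/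
def ipR {n : ℕ} (ε : Fin n → ℝ) (x y : Fin n → ℝ) : ℝ := ∑ i, ε i * x i * y i

/-- Its complex-bilinear extension to `ℂⁿ`. -/
def ipC {n : ℕ} (ε : Fin n → ℝ) (x y : Fin n → ℂ) : ℂ := ∑ i, (ε i : ℂ) * x i * y i

/-- The standard Hermitian scalar product on the spinor module. -/
def stdInner {n : ℕ} (u v : Spinor n) : ℂ := ∑ b, (starRingEnd ℂ) (u b) * v b

/-- Clifford multiplication by the product `e_{i₁} ⋯ e_{i_k}` over a set of indices
`s = {i₁ < … < i_k}`, taken in increasing order. -/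
def cliffSet {n : ℕ} (ε : Fin n → ℝ) (s : Finset (Fin n)) :
    Matrix (Fin (n / 2) → Fin 2) (Fin (n / 2) → Fin 2) ℂ :=
  ((s.sort (· ≤ ·)).map (Phi ε)).prod

/-- The set of indices with `ε_i = -1`. -/
def negSet {n : ℕ} (ε : Fin n → ℝ) : Finset (Fin n) := Finset.univ.filter fun i => ε i = -1

/-- The indefinite spinor inner product `⟨u,v⟩_Δ = d · (e_{i₁} ⋯ e_{i_p} · u, v)`,
where `i₁ < … < i_p` are the indices with `ε = -1`. -/
def sform {n : ℕ} (ε : Fin n → ℝ) (d : ℂ) (u v : Spinor n) : ℂ :=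
  d * stdInner ((cliffSet ε (negSet ε)).mulVec u) v

/-- The coefficient `d_{k,p} · ε_{i₁} ⋯ ε_{i_k} · ⟨e_{i₁} ⋯ e_{i_k} · χ, χ⟩_Δ` of the
algebraic Dirac form (`dD` is the constant of the spinor inner product, `dk` is `d_{k,p}`). -/
def dCoeff {n : ℕ} (ε : Fin n → ℝ) (dD dk : ℂ) (s : Finset (Fin n)) (χ : Spinor n) : ℂ :=
  dk * (∏ i ∈ s, (ε i : ℂ)) * sform ε dD ((cliffSet ε s).mulVec χ) χ

/-- The covector `X^♭ = ⟨X,·⟩_{p,q}`. -/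
def flat {n : ℕ} (ε : Fin n → ℝ) (X : Fin n → ℝ) : (Fin n → ℝ) →ₗ[ℝ] ℝ :=
  ∑ i, (ε i * X i) • LinearMap.proj i

/-- The wedge product of `k` one-forms, as an alternating `k`-form. -/
def wedge1 {n k : ℕ} (f : Fin k → ((Fin n → ℝ) →ₗ[ℝ] ℝ)) :
    AlternatingMap ℝ (Fin n → ℝ) ℝ (Fin k) :=
  (Matrix.detRowAlternating : AlternatingMap ℝ (Fin k → ℝ) ℝ (Fin k)).compLinearMap
    (LinearMap.pi f)

/-- The algebraic Dirac `k`-form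
`α^k_χ = d_{k,p} ∑_{i₁<⋯<i_k} ε_{i₁}⋯ε_{i_k} ⟨e_{i₁}⋯e_{i_k}·χ, χ⟩_Δ e^♭_{i₁} ∧ ⋯ ∧ e^♭_{i_k}`
(a real form; the coefficients are real by the choice of the constant `dk = d_{k,p}`). -/
def diracForm {n : ℕ} (ε : Fin n → ℝ) (dD dk : ℂ) (k : ℕ) (χ : Spinor n) :
    AlternatingMap ℝ (Fin n → ℝ) ℝ (Fin k) :=
  ∑ s : Finset (Fin n),
    if h : s.card = k then
      (dCoeff ε dD dk s χ).re •
        wedge1 fun j => flat ε (Pi.single (s.orderEmbOfFin h j) 1)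
    else 0

/-- The wedge product of `j` one-forms with a `(p-j)`-form, as an alternating `p`-form. -/
def wedgeMix {n p j : ℕ} (h : j ≤ p) (f : Fin j → ((Fin n → ℝ) →ₗ[ℝ] ℝ))
    (β : AlternatingMap ℝ (Fin n → ℝ) ℝ (Fin (p - j))) :
    AlternatingMap ℝ (Fin n → ℝ) ℝ (Fin p) :=
  AlternatingMap.domDomCongr (finSumFinEquiv.trans (finCongr (by omega)))
    ((TensorProduct.lid ℝ ℝ).toLinearMap.compAlternatingMap ((wedge1 f).domCoprod β))

/-- The basis spinor `u(ε₁,…,ε_m)` (encoded by `a : Fin m → Fin 2`, where `a ν = 0`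
corresponds to the label `ε_{ν+1} = 1` and `a ν = 1` to `ε_{ν+1} = -1`). -/
def uB (n : ℕ) (a : Fin (n / 2) → Fin 2) : Spinor n := fun b => if b = a then 1 else 0

end

end Paper
namespace Paper

/-- The lightlike vector `e₋ = (e_{n+1} - e₀)/√2` in `ℝ^{p+1,q+1} = ℝ^{n+2}`. -/
noncomputable def eMinus (n : ℕ) : Fin (n + 2) → ℝ :=
  (Real.sqrt 2)⁻¹ • (Pi.single (Fin.last (n + 1)) 1 - Pi.single 0 1)

/-!
Each `Phi ε i` is a scalar multiple of a Kronecker product of 2×2 matrices, and two distinct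
ones anticommute in exactly one Kronecker slot; hence `cliffR` satisfies the Clifford relation
`X·Y + Y·X = -2⟨X,Y⟩`, and any two vectors annihilating the same nonzero spinor are orthogonal.
Applied to `e₋` this gives `X₀ = -X_{n+1}` for every `X` with `X·v = 0`, so `X - √2 X_{n+1} e₋`
has vanishing `e₀`- and `e_{n+1}`-components. The kernel is therefore `ℝe₋` plus its intersection
with the hyperplane `X₀ = 0`, which has codimension one in it since `e₋` has `e₀`-component ≠ 0.
-/

noncomputable section

lemma matG1_mul_matG2 : matG1 * matG2 = -(matG2 * matG1) := by
  ext i j; fin_cases i <;> fin_cases j <;> simp [matG1, matG2, Matrix.mul_apply]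

lemma matG1_mul_matT : matG1 * matT = -(matT * matG1) := by
  ext i j; fin_cases i <;> fin_cases j <;> simp [matG1, matT, Matrix.mul_apply]

lemma matG2_mul_matT : matG2 * matT = -(matT * matG2) := by
  ext i j; fin_cases i <;> fin_cases j <;> simp [matG2, matT, Matrix.mul_apply]

lemma matT_mul_self : matT * matT = 1 := by
  ext i j; fin_cases i <;> fin_cases j <;> simp [matT, Matrix.mul_apply]

lemma matG1_mul_self : matG1 * matG1 = -1 := by
  ext i j; fin_cases i <;> fin_cases j <;> simp [matG1, Matrix.mul_apply]

lemma matG2_mul_self : matG2 * matG2 = -1 := by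
  ext i j; fin_cases i <;> fin_cases j <;> simp [matG2, Matrix.mul_apply]

section tprod

variable {m : ℕ}

lemma tprod_mul (M N : Fin m → Matrix (Fin 2) (Fin 2) ℂ) :
    tprod M * tprod N = tprod fun ν => M ν * N ν := by
  ext a b
  simp only [tprod, Matrix.mul_apply, Matrix.of_apply, Finset.prod_univ_sum,
    Fintype.piFinset_univ, Finset.prod_mul_distrib]

lemma tprod_one : tprod (fun _ : Fin m => (1 : Matrix (Fin 2) (Fin 2) ℂ)) = 1 := by
  ext a b
  simp only [tprod, Matrix.of_apply, Matrix.one_apply, Finset.prod_boole]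
  simp [funext_iff]

lemma tprod_smul (c : Fin m → ℂ) (M : Fin m → Matrix (Fin 2) (Fin 2) ℂ) :
    tprod (fun ν => c ν • M ν) = (∏ ν, c ν) • tprod M := by
  ext a b
  simp [tprod, Finset.prod_mul_distrib]

lemma tprod_anticomm {M N : Fin m → Matrix (Fin 2) (Fin 2) ℂ} (ν₀ : Fin m)
    (h₀ : M ν₀ * N ν₀ = -(N ν₀ * M ν₀)) (h : ∀ ν ≠ ν₀, M ν * N ν = N ν * M ν) :
    tprod M * tprod N = -(tprod N * tprod M) := by
  have slots : (fun ν => M ν * N ν) = fun ν => (if ν = ν₀ then -1 else 1 : ℂ) • (N ν * M ν) := by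
    ext1 ν
    by_cases hν : ν = ν₀
    · simp [hν, h₀]
    · simp [hν, h ν hν]
  rw [tprod_mul, tprod_mul, slots, tprod_smul]
  simp

lemma tprod_mul_self_of_neg_one {M : Fin m → Matrix (Fin 2) (Fin 2) ℂ} (ν₀ : Fin m)
    (h₀ : M ν₀ * M ν₀ = -1) (h : ∀ ν ≠ ν₀, M ν * M ν = 1) :
    tprod M * tprod M = -1 := by
  have slots : (fun ν => M ν * M ν) = fun ν => (if ν = ν₀ then -1 else 1 : ℂ) • 1 := by
    ext1 ν
    by_cases hν : ν = ν₀
    · simp [hν, h₀]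
    · simp [hν, h ν hν]
  rw [tprod_mul, slots, tprod_smul, tprod_one]
  simp

lemma tprod_mul_self_of_one {M : Fin m → Matrix (Fin 2) (Fin 2) ℂ}
    (h : ∀ ν, M ν * M ν = 1) : tprod M * tprod M = 1 := by
  rw [tprod_mul, funext h, tprod_one]

end tprod

section Phi

variable {n : ℕ} (ε : Fin n → ℝ)

def phiSlot (i : Fin n) (ν : Fin (n / 2)) : Matrix (Fin 2) (Fin 2) ℂ :=
  if i.val < 2 * (n / 2) then
    if ν.val < i.val / 2 then matT
    else if ν.val = i.val / 2 then (if i.val % 2 = 0 then matG1 else matG2)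
    else matE
  else matT

def phiScalar (i : Fin n) : ℂ :=
  if i.val < 2 * (n / 2) then tau ε i else tau ε i * Complex.I

lemma Phi_eq_smul_tprod (i : Fin n) : Phi ε i = phiScalar ε i • tprod (phiSlot i) := by
  unfold Phi phiScalar phiSlot
  split_ifs <;> simp [smul_smul]

lemma tau_mul_self {j : Fin n} (hε : ε j = 1 ∨ ε j = -1) : tau ε j * tau ε j = ε j := by
  rcases hε with h | h <;> norm_num [tau, h]

lemma Phi_mul_self {i : Fin n} (hε : ε i = 1 ∨ ε i = -1) :
    Phi ε i * Phi ε i = (-ε i : ℂ) • 1 := by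
  rw [Phi_eq_smul_tprod, smul_mul_smul_comm]
  by_cases h : i.val < 2 * (n / 2)
  · have slots : tprod (phiSlot i) * tprod (phiSlot i) = -1 := by
      refine tprod_mul_self_of_neg_one ⟨i.val / 2, by omega⟩ ?_ fun ν hν => ?_
      · by_cases hi : i.val % 2 = 0 <;> simp [phiSlot, h, hi, matG1_mul_self, matG2_mul_self]
      · have hν' : ν.val ≠ i.val / 2 := fun hc => hν (Fin.ext hc)
        by_cases hlt : ν.val < i.val / 2 <;> simp [phiSlot, h, hlt, hν', matT_mul_self, matE]
    rw [slots, phiScalar, if_pos h, tau_mul_self ε hε, smul_neg, neg_smul]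
  · have slots : tprod (phiSlot i) * tprod (phiSlot i) = 1 :=
      tprod_mul_self_of_one fun ν => by simp [phiSlot, h, matT_mul_self]
    rw [slots, phiScalar, if_neg h, mul_mul_mul_comm, tau_mul_self ε hε, Complex.I_mul_I]
    simp

lemma Phi_anticomm_of_lt {i j : Fin n} (hij : i.val < j.val) :
    Phi ε i * Phi ε j = -(Phi ε j * Phi ε i) := by
  rw [Phi_eq_smul_tprod, Phi_eq_smul_tprod, smul_mul_smul_comm, smul_mul_smul_comm,
    mul_comm (phiScalar ε i), ← smul_neg]
  congr 1
  have hi : i.val < 2 * (n / 2) := by omega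
  refine tprod_anticomm ⟨i.val / 2, by omega⟩ ?_ fun ν hν => ?_
  · by_cases hj : j.val < 2 * (n / 2)
    · by_cases heq : i.val / 2 = j.val / 2
      · have hpar : i.val % 2 = 0 ∧ j.val % 2 = 1 := by omega
        simp [phiSlot, hi, hj, ← heq, hpar, matG1_mul_matG2]
      · have hlt : i.val / 2 < j.val / 2 := by omega
        by_cases hpar : i.val % 2 = 0 <;>
          simp [phiSlot, hi, hj, hlt, hpar, matG1_mul_matT, matG2_mul_matT]
    · by_cases hpar : i.val % 2 = 0 <;>
        simp [phiSlot, hi, hj, hpar, matG1_mul_matT, matG2_mul_matT]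
  · have hν' : ν.val ≠ i.val / 2 := fun hc => hν (Fin.ext hc)
    by_cases hlt : ν.val < i.val / 2
    · have hjν : ¬ j.val < 2 * (n / 2) ∨ ν.val < j.val / 2 := by omega
      rcases hjν with hj | hj <;> simp [phiSlot, hi, hlt, hj]
    · simp [phiSlot, hi, hlt, hν', matE]

lemma Phi_mul_add_mul_swap (hε : ∀ i, ε i = 1 ∨ ε i = -1) (i j : Fin n) :
    Phi ε i * Phi ε j + Phi ε j * Phi ε i = if i = j then (-2 * ε i : ℂ) • 1 else 0 := by
  rcases lt_trichotomy i.val j.val with h | h | h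
  · rw [Phi_anticomm_of_lt ε h, if_neg (Fin.ne_of_lt h), neg_add_cancel]
  · obtain rfl := Fin.ext h
    rw [if_pos rfl, Phi_mul_self ε (hε i), ← two_smul ℂ, smul_smul]
    ring_nf
  · rw [Phi_anticomm_of_lt ε h, if_neg (Fin.ne_of_gt h), add_neg_cancel]

end Phi

section Clifford

variable {n : ℕ} (ε : Fin n → ℝ)

lemma cliffR_add (x y : Fin n → ℝ) : cliffR ε (x + y) = cliffR ε x + cliffR ε y := by
  simp [cliffR, add_smul, Finset.sum_add_distrib]

lemma cliffR_smul (a : ℝ) (x : Fin n → ℝ) : cliffR ε (a • x) = (a : ℂ) • cliffR ε x := by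
  rw [cliffR, cliffR, Finset.smul_sum]
  exact Finset.sum_congr rfl fun i _ => by
    rw [smul_smul, Pi.smul_apply, smul_eq_mul, Complex.ofReal_mul]

def cliffMulVec (v : Spinor n) : (Fin n → ℝ) →ₗ[ℝ] Spinor n where
  toFun x := (cliffR ε x).mulVec v
  map_add' x y := by rw [cliffR_add, Matrix.add_mulVec]
  map_smul' a x := by
    ext b
    simp [cliffR_smul, Matrix.smul_mulVec, Complex.real_smul]

lemma cliffR_mul_add_mul_swap (hε : ∀ i, ε i = 1 ∨ ε i = -1) (x y : Fin n → ℝ) :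
    cliffR ε x * cliffR ε y + cliffR ε y * cliffR ε x = (-2 * ipR ε x y : ℂ) • 1 := by
  calc cliffR ε x * cliffR ε y + cliffR ε y * cliffR ε x
      = ∑ i, ∑ j, ((x i : ℂ) * y j) • (Phi ε i * Phi ε j + Phi ε j * Phi ε i) := by
        simp only [cliffR, Finset.sum_mul, Finset.mul_sum, smul_mul_smul_comm, smul_add,
          Finset.sum_add_distrib]
        rw [Finset.sum_comm]
        simp_rw [mul_comm (y _ : ℂ)]
    _ = ∑ i, ((x i : ℂ) * y i * (-2 * ε i)) • (1 : Matrix _ _ ℂ) := by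
        simp [Phi_mul_add_mul_swap ε hε, smul_smul]
    _ = (-2 * ipR ε x y : ℂ) • 1 := by
        rw [← Finset.sum_smul, ipR]
        push_cast
        rw [Finset.mul_sum]
        congr 1
        exact Finset.sum_congr rfl fun i _ => by ring

lemma ipR_eq_zero_of_mulVec_eq_zero (hε : ∀ i, ε i = 1 ∨ ε i = -1) {x y : Fin n → ℝ}
    {v : Spinor n} (hv : v ≠ 0) (hx : (cliffR ε x).mulVec v = 0)
    (hy : (cliffR ε y).mulVec v = 0) : ipR ε x y = 0 := by
  have h := congrArg (·.mulVec v) (cliffR_mul_add_mul_swap ε hε x y)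
  simp only [Matrix.add_mulVec, ← Matrix.mulVec_mulVec, hx, hy, Matrix.mulVec_zero,
    add_zero, Matrix.smul_mulVec, Matrix.one_mulVec] at h
  have := (smul_eq_zero.mp h.symm).resolve_right hv
  exact_mod_cast (mul_eq_zero.mp this).resolve_left (by norm_num)

end Clifford

lemma finrank_inf_ker_add_one {K V : Type*} [Field K] [AddCommGroup V] [Module K V]
    [FiniteDimensional K V] {W : Submodule K V} {f : Module.Dual K V} {e : V} (he : e ∈ W)
    (hfe : f e ≠ 0) : Module.finrank K ↥(W ⊓ LinearMap.ker f) + 1 = Module.finrank K W := by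
  have hf : f ∘ₗ W.subtype ≠ 0 := fun h => hfe (by simpa using LinearMap.congr_fun h ⟨e, he⟩)
  have hker : Module.finrank K ↥(W ⊓ LinearMap.ker f) =
      Module.finrank K ↥(LinearMap.ker (f ∘ₗ W.subtype)) := by
    rw [LinearMap.ker_comp, ← top_inf_eq (Submodule.comap _ _), ← Submodule.comap_subtype_self W,
      ← Submodule.comap_inf]
    exact (Submodule.comapSubtypeEquivOfLe inf_le_left).finrank_eq.symm
  rw [hker]
  exact Module.Dual.finrank_ker_add_one_of_ne_zero hf

section eMinus

variable {n : ℕ}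

lemma eMinus_apply_zero : eMinus n 0 = -(Real.sqrt 2)⁻¹ := by
  simp [eMinus, (Fin.last_pos' (n := n + 1)).ne]

lemma sub_smul_eMinus_apply_zero (X : Fin (n + 2) → ℝ) :
    (X - (X (Fin.last (n + 1)) * Real.sqrt 2) • eMinus n) 0 = X 0 + X (Fin.last (n + 1)) := by
  simp [eMinus_apply_zero]

lemma sub_smul_eMinus_apply_last (X : Fin (n + 2) → ℝ) :
    (X - (X (Fin.last (n + 1)) * Real.sqrt 2) • eMinus n) (Fin.last (n + 1)) = 0 := by
  simp [eMinus, (Fin.last_pos' (n := n + 1)).ne']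

lemma ipR_eMinus_eq_zero_iff {ε : Fin (n + 2) → ℝ} (h0 : ε 0 = -1)
    (hlast : ε (Fin.last (n + 1)) = 1) {w : Fin (n + 2) → ℝ} :
    ipR ε (eMinus n) w = 0 ↔ w 0 = -w (Fin.last (n + 1)) := by
  have h : ipR ε (eMinus n) w = (Real.sqrt 2)⁻¹ * (w (Fin.last (n + 1)) + w 0) := by
    simp [ipR, eMinus, Pi.single_apply, mul_sub, sub_mul, Finset.sum_sub_distrib, h0, hlast]
    ring
  rw [h, mul_eq_zero, or_iff_right (by positivity), add_comm, add_eq_zero_iff_eq_neg]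

end eMinus

end

theorem kernel_of_annihilated_spinor_general
    (p q : ℕ) (ε : Fin (p + q + 2) → ℝ)
    (hε : ∀ i, ε i = 1 ∨ ε i = -1)
    (h0 : ε 0 = -1) (hlast : ε (Fin.last (p + q + 1)) = 1)
    (v : Spinor (p + q + 2)) (hv : v ≠ 0)
    (hann : (cliffR ε (eMinus (p + q))).mulVec v = 0) :
    -- `{X ∈ ℝ^{p+1,q+1} : X·v = 0} = ℝ e₋ ⊕ {y ∈ span(e₁,…,e_n) : y·v = 0}` …
    (∀ X : Fin (p + q + 2) → ℝ,
      (cliffR ε X).mulVec v = 0 ↔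
        ∃ (c : ℝ) (y : Fin (p + q + 2) → ℝ),
          y 0 = 0 ∧ y (Fin.last (p + q + 1)) = 0 ∧ (cliffR ε y).mulVec v = 0 ∧
          X = c • eMinus (p + q) + y) ∧
    -- … in particular its dimension exceeds by one that of the kernel in `ℝ^{p,q}`
    Set.finrank ℝ {X : Fin (p + q + 2) → ℝ | (cliffR ε X).mulVec v = 0}
      = Set.finrank ℝ {y : Fin (p + q + 2) → ℝ |
          y 0 = 0 ∧ y (Fin.last (p + q + 1)) = 0 ∧ (cliffR ε y).mulVec v = 0} + 1 := by
  have hK : ∀ X, (cliffR ε X).mulVec v = 0 → X 0 = -X (Fin.last (p + q + 1)) := fun X hX =>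
    (ipR_eMinus_eq_zero_iff h0 hlast).mp (ipR_eq_zero_of_mulVec_eq_zero ε hε hv hann hX)
  set L := cliffMulVec ε v
  have hL : ∀ X, (cliffR ε X).mulVec v = L X := fun _ => rfl
  simp only [hL] at hann hK ⊢
  refine ⟨fun X => ⟨fun hX => ?_, ?_⟩, ?_⟩
  · refine ⟨_, _, by rw [sub_smul_eMinus_apply_zero, hK X hX, neg_add_cancel],
      sub_smul_eMinus_apply_last X, by simp [hX, hann], (add_sub_cancel _ _).symm⟩
  · rintro ⟨c, y, -, -, hy, rfl⟩
    simp [hy, hann]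
  · have hW : {y | y 0 = 0 ∧ y (Fin.last (p + q + 1)) = 0 ∧ L y = 0} =
        ↑(LinearMap.ker L ⊓ LinearMap.ker (LinearMap.proj 0)) := by
      ext y
      simp only [Set.mem_ofPred_eq, SetLike.mem_coe, Submodule.mem_inf, LinearMap.mem_ker,
        LinearMap.proj_apply]
      exact ⟨fun ⟨hy0, _, hy⟩ => ⟨hy, hy0⟩, fun ⟨hy, hy0⟩ => ⟨hy0, by linarith [hK y hy], hy⟩⟩
    have hproj : (LinearMap.proj 0 : Module.Dual ℝ _) (eMinus (p + q)) ≠ 0 := by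
      simp [eMinus_apply_zero]
    have hker : {X | L X = 0} = (LinearMap.ker L : Set _) :=
      Set.ext fun _ => LinearMap.mem_ker.symm
    rw [hker, hW, Set.finrank, Set.finrank, Submodule.span_eq, Submodule.span_eq]
    exact (finrank_inf_ker_add_one (W := LinearMap.ker L) hann hproj).symm

theorem kernel_of_annihilated_spinor
    (p q : ℕ) (ε : Fin (p + q + 2) → ℝ)
    (hε : ∀ i, ε i = 1 ∨ ε i = -1)
    (hp : (negSet ε).card = p + 1)
    (h0 : ε 0 = -1) (hlast : ε (Fin.last (p + q + 1)) = 1)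
    (v : Spinor (p + q + 2)) (hv : v ≠ 0)
    (hann : (cliffR ε (eMinus (p + q))).mulVec v = 0) :
    -- `{X ∈ ℝ^{p+1,q+1} : X·v = 0} = ℝ e₋ ⊕ {y ∈ span(e₁,…,e_n) : y·v = 0}` …
    (∀ X : Fin (p + q + 2) → ℝ,
      (cliffR ε X).mulVec v = 0 ↔
        ∃ (c : ℝ) (y : Fin (p + q + 2) → ℝ),
          y 0 = 0 ∧ y (Fin.last (p + q + 1)) = 0 ∧ (cliffR ε y).mulVec v = 0 ∧
          X = c • eMinus (p + q) + y) ∧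
    -- … in particular its dimension exceeds by one that of the kernel in `ℝ^{p,q}`
    Set.finrank ℝ {X : Fin (p + q + 2) → ℝ | (cliffR ε X).mulVec v = 0}
      = Set.finrank ℝ {y : Fin (p + q + 2) → ℝ |
          y 0 = 0 ∧ y (Fin.last (p + q + 1)) = 0 ∧ (cliffR ε y).mulVec v = 0} + 1 :=
  kernel_of_annihilated_spinor_general p q ε hε h0 hlast v hv hann

end Paper
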